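/- Let k and n be natural numbers with k ≥ C(n,2) + 1, and let Δ: ℕ^(2) ↠ [k] be a surjective colouring. Then |F_Δ| ≥ n. -/

import Mathlib

open Finset

/-- The set of colours attained by `Δ` on `r`-element subsets of `X`. -/
def coloursOn {α : Type*} (r : ℕ) (Δ : Finset ℕ → α) (X : Set ℕ) : Set α :=
  Δ '' {e : Finset ℕ | ↑e ⊆ X ∧ e.card = r}

/-- `γ(X)`: the number of colours attained by `Δ` on `r`-element subsets of `X`. -/
noncomputable def gamma {α : Type*} (r : ℕ) (Δ : Finset ℕ → α) (X : Set ℕ) : ℕ :=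
  (coloursOn r Δ X).ncard

/-- `F_Δ`: the set of values `γ(X)` over infinite subsets `X ⊆ ℕ`. -/
def Fdelta {α : Type*} (r : ℕ) (Δ : Finset ℕ → α) : Set ℕ :=
  {m | ∃ X : Set ℕ, X.Infinite ∧ gamma r Δ X = m}

/-- `Δ` is a surjective colouring of `ℕ^(r)`, the `r`-element subsets of `ℕ`,
onto the colour set `[k] = {1, …, k}`. -/
def IsColouring (r k : ℕ) (Δ : Finset ℕ → ℕ) : Prop :=
  (∀ e : Finset ℕ, e.card = r → Δ e ∈ Finset.Icc 1 k) ∧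
  ∀ c ∈ Finset.Icc 1 k, ∃ e : Finset ℕ, e.card = r ∧ Δ e = c

/-!
By Ramsey's theorem there is an infinite set `Y` on which `Δ` is monochromatic, and `Y` can be
thinned so that each vertex of a finite set `F` realising all `k` colours sends a single colour
to `Y`. For `S ⊆ F` let `g S = γ(Y ∪ S)`; then `g ∅ = 1` and `g F = k`. Deleting a vertex `i`
from `S` loses at most `|S|` colours (the colour from `i` to `Y` and those from `i` to the rest
of `S`), and a colour is lost only when `i` is an endpoint of a fixed edge realising it, so the
losses over `i ∈ S` sum to at most `2 (g S - 1)`. For a smallest `S` with `g S > C(j,2)` the two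
bounds force a loss of at most `j`, so `C(j,2) < g S ≤ C(j+1,2)`. These intervals are disjoint
for `j = 1, …, n`.
-/

theorem Finset.exists_subset_choose_two_lt_le_choose_two {β : Type*} [DecidableEq β]
    (g : Finset β → ℕ) (F : Finset β) {j : ℕ} (hj : 1 ≤ j) (h_empty : g ∅ = 1)
    (h_jump : ∀ S ⊆ F, ∀ i ∈ S, g S ≤ g (S.erase i) + S.card)
    (h_count : ∀ S ⊆ F, ∀ d, (∀ i ∈ S, g (S.erase i) + d ≤ g S) → S.card * d ≤ (g S - g ∅) * 2)
    (hF : j.choose 2 < g F) :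
    ∃ S ⊆ F, j.choose 2 < g S ∧ g S ≤ (j + 1).choose 2 := by
  obtain ⟨S, hS, hS_min⟩ := exists_min_image {S ∈ F.powerset | j.choose 2 < g S} card
    ⟨F, mem_filter.2 ⟨mem_powerset_self F, hF⟩⟩
  obtain ⟨hSF, hgS⟩ := mem_filter.1 hS
  rw [mem_powerset] at hSF
  refine ⟨S, hSF, hgS, ?_⟩
  by_contra! hgS_big
  have hsucc : (j + 1).choose 2 = j.choose 2 + j := by
    rw [Nat.choose_succ_succ, Nat.choose_one_right, add_comm]
  have herase (i : β) (hi : i ∈ S) : g (S.erase i) ≤ j.choose 2 := by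
    by_contra! h
    have := hS_min (S.erase i) (mem_filter.2 ⟨mem_powerset.2 ((erase_subset i S).trans hSF), h⟩)
    exact (card_erase_lt_of_mem hi).not_ge this
  obtain rfl | ⟨i, hi⟩ := S.eq_empty_or_nonempty
  · omega
  have hi_erase := herase i hi
  have hjump := h_jump S hSF i hi
  have hcard : j + 1 ≤ S.card := by omega
  have hcount := h_count S hSF (j + 1) fun i hi => by
    have := herase i hi
    omega
  have hchoose : (j + 1).choose 2 * 2 = (j + 1) * j := by
    rw [← Nat.add_one_mul_choose_eq, Nat.choose_one_right]
  rw [h_empty] at hcount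
  have h_edges : S.card * (j + 1) + 2 ≤ j.choose 2 * 2 + S.card * 2 := by omega
  nlinarith [Nat.mul_le_mul_right j hcard]

theorem Nat.eq_of_choose_two_lt_of_le_choose_two {a b v : ℕ} (ha : a.choose 2 < v)
    (ha' : v ≤ (a + 1).choose 2) (hb : b.choose 2 < v) (hb' : v ≤ (b + 1).choose 2) : a = b := by
  by_contra! hab
  rcases hab.lt_or_gt with h | h
  · exact (hb.trans_le ha').not_ge (Nat.choose_le_choose 2 h)
  · exact (ha.trans_le hb').not_ge (Nat.choose_le_choose 2 h)

theorem Set.Infinite.exists_infinite_fiber_of_mapsTo {β γ : Type*} {A : Set β} {C : Set γ}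
    {f : β → γ} (hA : A.Infinite) (hC : C.Finite) (hf : Set.MapsTo f A C) :
    ∃ c, (A ∩ f ⁻¹' {c}).Infinite := by
  by_contra! h
  refine hA ((hC.biUnion fun c _ => h c).subset fun a ha => ?_)
  exact Set.mem_biUnion (hf ha) ⟨ha, rfl⟩

section Colouring

open Set

variable {α : Type*} {Δ : Finset ℕ → α}

theorem pair_mem_coloursOn {X : Set ℕ} {x y : ℕ} (hx : x ∈ X) (hy : y ∈ X) (hxy : x ≠ y) :
    Δ {x, y} ∈ coloursOn 2 Δ X :=
  ⟨{x, y}, ⟨by simp [insert_subset_iff, hx, hy], Finset.card_pair hxy⟩, rfl⟩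

theorem coloursOn_mono {r : ℕ} {X X' : Set ℕ} (h : X ⊆ X') : coloursOn r Δ X ⊆ coloursOn r Δ X' :=
  image_mono fun _ he => ⟨he.1.trans h, he.2⟩

theorem coloursOn_finite {r : ℕ} (hfin : (coloursOn r Δ univ).Finite) (X : Set ℕ) :
    (coloursOn r Δ X).Finite :=
  hfin.subset (coloursOn_mono (subset_univ X))

theorem gamma_mono {r : ℕ} (hfin : (coloursOn r Δ univ).Finite) {X X' : Set ℕ} (h : X ⊆ X') :
    gamma r Δ X ≤ gamma r Δ X' :=
  ncard_le_ncard (coloursOn_mono h) (coloursOn_finite hfin X')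

theorem ncard_coloursOn_sdiff {r : ℕ} (hfin : (coloursOn r Δ univ).Finite) {X X' : Set ℕ}
    (h : X ⊆ X') : (coloursOn r Δ X' \ coloursOn r Δ X).ncard = gamma r Δ X' - gamma r Δ X :=
  ncard_sdiff (coloursOn_mono h) (coloursOn_finite hfin X)

theorem finite_Fdelta {r : ℕ} (hfin : (coloursOn r Δ univ).Finite) : (Fdelta r Δ).Finite :=
  (finite_Iic (gamma r Δ univ)).subset fun _ ⟨X, _, hX⟩ => hX ▸ gamma_mono hfin (subset_univ X)

theorem exists_finset_coloursOn_eq_univ {r : ℕ} (hfin : (coloursOn r Δ univ).Finite) :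
    ∃ F : Finset ℕ, coloursOn r Δ F = coloursOn r Δ univ := by
  choose! e he using fun c (hc : c ∈ coloursOn r Δ univ) => hc
  refine ⟨hfin.toFinset.biUnion e, (coloursOn_mono (subset_univ _)).antisymm fun c hc => ?_⟩
  refine ⟨e c, ⟨fun x hx => ?_, (he c hc).1.2⟩, (he c hc).2⟩
  exact Finset.mem_coe.2 (Finset.mem_biUnion.2 ⟨c, hfin.mem_toFinset.2 hc, hx⟩)

theorem gamma_eq_one_of_pair_eq {Y : Set ℕ} (hY : Y.Nontrivial) {c : α}
    (hc : ∀ x ∈ Y, ∀ y ∈ Y, x ≠ y → Δ {x, y} = c) : gamma 2 Δ Y = 1 := by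
  rw [gamma, ncard_eq_one]
  refine ⟨c, eq_singleton_iff_unique_mem.2 ⟨?_, ?_⟩⟩
  · obtain ⟨x, hx, y, hy, hxy⟩ := hY
    exact hc x hx y hy hxy ▸ pair_mem_coloursOn hx hy hxy
  · rintro _ ⟨e, ⟨he, hcard⟩, rfl⟩
    obtain ⟨x, y, hxy, rfl⟩ := Finset.card_eq_two.1 hcard
    exact hc x (he (by simp)) y (he (by simp)) hxy

theorem IsColouring.coloursOn_univ {r k : ℕ} {Δ : Finset ℕ → ℕ} (hΔ : IsColouring r k Δ) :
    coloursOn r Δ univ = Finset.Icc 1 k := by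
  ext c
  constructor
  · rintro ⟨e, ⟨-, he⟩, rfl⟩
    exact hΔ.1 e he
  · intro hc
    obtain ⟨e, he, rfl⟩ := hΔ.2 c hc
    exact ⟨e, ⟨subset_univ _, he⟩, rfl⟩

theorem IsColouring.gamma_univ {r k : ℕ} {Δ : Finset ℕ → ℕ} (hΔ : IsColouring r k Δ) :
    gamma r Δ univ = k := by
  rw [gamma, hΔ.coloursOn_univ, ncard_coe_finset, Nat.card_Icc, Nat.add_sub_cancel]

theorem coloursOn_insert_subset (i : ℕ) (W : Set ℕ) :
    coloursOn 2 Δ (insert i W) ⊆ coloursOn 2 Δ W ∪ (fun w => Δ {i, w}) '' (W \ {i}) := by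
  rintro _ ⟨e, ⟨he, hcard⟩, rfl⟩
  obtain ⟨u, v, huv, rfl⟩ := Finset.card_eq_two.1 hcard
  have hu : u = i ∨ u ∈ W := he (by simp)
  have hv : v = i ∨ v ∈ W := he (by simp)
  rcases eq_or_ne u i with rfl | hui
  · exact Or.inr ⟨v, ⟨hv.resolve_left huv.symm, huv.symm⟩, rfl⟩
  rcases eq_or_ne v i with rfl | hvi
  · exact Or.inr ⟨u, ⟨hu.resolve_left hui, hui⟩, congrArg Δ (Finset.pair_comm _ _)⟩
  · exact Or.inl (pair_mem_coloursOn (hu.resolve_left hui) (hv.resolve_left hvi) huv)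

variable (hfin : (coloursOn 2 Δ univ).Finite)
include hfin

theorem exists_infinite_subset_pair_eq {A : Set ℕ} (hA : A.Infinite) (x : ℕ) :
    ∃ B ⊆ A \ {x}, B.Infinite ∧ ∃ c, ∀ y ∈ B, Δ {x, y} = c := by
  obtain ⟨c, hc⟩ := (hA.sdiff (finite_singleton x)).exists_infinite_fiber_of_mapsTo hfin
    (f := fun y => Δ {x, y}) fun y hy => pair_mem_coloursOn (mem_univ x) (mem_univ y)
      (Ne.symm hy.2)
  exact ⟨_, inter_subset_left, hc, c, fun y hy => hy.2⟩

theorem exists_infinite_subset_forall_pair_eq {A : Set ℕ} (hA : A.Infinite) (F : Finset ℕ) :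
    ∃ B ⊆ A, B.Infinite ∧ ∀ x ∈ F, ∃ c, ∀ y ∈ B, y ≠ x → Δ {x, y} = c := by
  induction F using Finset.induction_on with
  | empty => exact ⟨A, subset_rfl, hA, by simp⟩
  | insert x F _ ih =>
    obtain ⟨B, hBA, hB, hBF⟩ := ih
    obtain ⟨B', hB'B, hB', c, hc⟩ := exists_infinite_subset_pair_eq hfin hB x
    refine ⟨B', hB'B.trans (sdiff_subset.trans hBA), hB', ?_⟩
    rintro x' hx'
    rcases Finset.mem_insert.1 hx' with rfl | hx'
    · exact ⟨c, fun y hy _ => hc y hy⟩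
    · obtain ⟨c', hc'⟩ := hBF x' hx'
      exact ⟨c', fun y hy => hc' y (hB'B hy).1⟩

theorem exists_infinite_monochromatic :
    ∃ Y : Set ℕ, Y.Infinite ∧ ∃ c, ∀ x ∈ Y, ∀ y ∈ Y, x ≠ y → Δ {x, y} = c := by
  choose next hnext_sub hnext_inf col hcol using fun A : {A : Set ℕ // A.Infinite} =>
    exists_infinite_subset_pair_eq hfin A.2 A.2.nonempty.some
  let A : ℕ → {A : Set ℕ // A.Infinite} := fun n => (fun A => ⟨next A, hnext_inf A⟩)^[n]
    ⟨univ, infinite_univ⟩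
  let a : ℕ → ℕ := fun n => (A n).2.nonempty.some
  have hA_succ (n : ℕ) : (A (n + 1)).1 = next (A n) := by
    simp only [A, Function.iterate_succ_apply']
  have hA_anti : Antitone fun n => (A n).1 := antitone_nat_of_succ_le fun n => by
    rw [hA_succ]
    exact (hnext_sub _).trans sdiff_subset
  have ha_mem (n : ℕ) : a n ∈ (A n).1 := (A n).2.nonempty.some_mem
  have ha_lt {s t : ℕ} (hst : s < t) : a t ≠ a s ∧ Δ {a s, a t} = col (A s) := by
    have ht : a t ∈ next (A s) := hA_succ s ▸ hA_anti hst (ha_mem t)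
    exact ⟨(hnext_sub _ ht).2, hcol _ _ ht⟩
  have ha_inj : Function.Injective a := fun s t hst => by
    by_contra hne
    rcases lt_or_gt_of_ne hne with h | h
    · exact (ha_lt h).1 hst.symm
    · exact (ha_lt h).1 hst
  obtain ⟨c, hc⟩ := infinite_univ.exists_infinite_fiber_of_mapsTo hfin
    (f := fun s => Δ {a s, a (s + 1)})
    fun s _ => pair_mem_coloursOn (mem_univ _) (mem_univ _) (ha_lt s.lt_succ_self).1.symm
  refine ⟨a '' (univ ∩ _), hc.image ha_inj.injOn, c, ?_⟩
  have hcol_eq {s t : ℕ} (hst : s < t) (hs : Δ {a s, a (s + 1)} = c) : Δ {a s, a t} = c := by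
    rw [(ha_lt hst).2, ← (ha_lt s.lt_succ_self).2, hs]
  rintro _ ⟨s, ⟨-, hs⟩, rfl⟩ _ ⟨t, ⟨-, ht⟩, rfl⟩ hne
  rcases lt_or_gt_of_ne (ha_inj.ne_iff.1 hne) with h | h
  · exact hcol_eq h hs
  · rw [Finset.pair_comm]
    exact hcol_eq h ht

theorem gamma_union_le_gamma_union_erase_add_card {X : Set ℕ} {S : Finset ℕ} {i : ℕ} {c : α}
    (hi : i ∈ S) (hc : ∀ y ∈ X, y ≠ i → Δ {i, y} = c) :
    gamma 2 Δ (X ∪ S) ≤ gamma 2 Δ (X ∪ ↑(S.erase i)) + S.card := by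
  have hXS : X ∪ ↑S = insert i (X ∪ ↑(S.erase i)) := by
    rw [Finset.coe_erase, ← union_insert, insert_sdiff_singleton,
      Set.insert_eq_of_mem (Finset.mem_coe.2 hi)]
  have hsub : coloursOn 2 Δ (X ∪ S) ⊆
      coloursOn 2 Δ (X ∪ ↑(S.erase i)) ∪ insert c ((fun w => Δ {i, w}) '' ↑(S.erase i)) := by
    rw [hXS]
    refine (coloursOn_insert_subset i _).trans (union_subset_union_right _ ?_)
    rintro _ ⟨w, ⟨hw | hw, hwi⟩, rfl⟩
    · exact Or.inl (hc w hw hwi)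
    · exact Or.inr ⟨w, hw, rfl⟩
  have himage : ((fun w => Δ {i, w}) '' ↑(S.erase i)).ncard ≤ (S.erase i).card :=
    (ncard_image_le (S.erase i).finite_toSet).trans_eq (ncard_coe_finset _)
  calc gamma 2 Δ (X ∪ S)
      ≤ (coloursOn 2 Δ (X ∪ ↑(S.erase i)) ∪ insert c ((fun w => Δ {i, w}) '' ↑(S.erase i))).ncard :=
        ncard_le_ncard hsub
          ((coloursOn_finite hfin _).union (((S.erase i).finite_toSet.image _).insert c))
    _ ≤ gamma 2 Δ (X ∪ ↑(S.erase i)) + (((fun w => Δ {i, w}) '' ↑(S.erase i)).ncard + 1) :=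
        (ncard_union_le _ _).trans (Nat.add_le_add_left (ncard_insert_le _ _) _)
    _ ≤ gamma 2 Δ (X ∪ ↑(S.erase i)) + S.card := by
        rw [← Finset.card_erase_add_one hi]
        omega

theorem card_mul_le_gamma_sub_mul_two (X : Set ℕ) (S : Finset ℕ) {d : ℕ}
    (hd : ∀ i ∈ S, gamma 2 Δ (X ∪ ↑(S.erase i)) + d ≤ gamma 2 Δ (X ∪ S)) :
    S.card * d ≤ (gamma 2 Δ (X ∪ S) - gamma 2 Δ X) * 2 := by
  classical
  set T := ((coloursOn_finite hfin (X ∪ S)).sdiff (t := coloursOn 2 Δ X)).toFinset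
  have hT : T.card = gamma 2 Δ (X ∪ S) - gamma 2 Δ X := by
    rw [← ncard_coe_finset, Finite.coe_toFinset, ncard_coloursOn_sdiff hfin Set.subset_union_left]
  rw [← hT]
  refine Finset.card_mul_le_card_mul (fun i c => c ∉ coloursOn 2 Δ (X ∪ ↑(S.erase i)))
    (fun i hi => ?_) (fun c hc => ?_)
  · have hXi : X ⊆ X ∪ ↑(S.erase i) := Set.subset_union_left
    have hSi : X ∪ ↑(S.erase i) ⊆ X ∪ S :=
      union_subset_union_right _ (Finset.coe_subset.2 (S.erase_subset i))
    have habove : (↑(T.bipartiteAbove (fun i c => c ∉ coloursOn 2 Δ (X ∪ ↑(S.erase i))) i) : Set α) =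
        coloursOn 2 Δ (X ∪ S) \ coloursOn 2 Δ (X ∪ ↑(S.erase i)) := by
      ext c
      simp only [Finset.bipartiteAbove, Finset.coe_filter, T, Finite.mem_toFinset, mem_sdiff,
        mem_ofPred_eq]
      exact ⟨fun h => ⟨h.1.1, h.2⟩, fun h => ⟨⟨h.1, fun hc => h.2 (coloursOn_mono hXi hc)⟩, h.2⟩⟩
    rw [← ncard_coe_finset, habove, ncard_coloursOn_sdiff hfin hSi]
    have := hd i hi
    omega
  · obtain ⟨e, ⟨he, hcard⟩, rfl⟩ := ((Finite.mem_toFinset _).1 hc).1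
    refine (Finset.card_le_card fun i hi => ?_).trans hcard.le
    rw [Finset.bipartiteBelow, Finset.mem_filter] at hi
    by_contra hie
    refine hi.2 ⟨e, ⟨fun x hx => ?_, hcard⟩, rfl⟩
    rcases he hx with hxX | hxS
    · exact Or.inl hxX
    · exact Or.inr (Finset.mem_erase.2 ⟨fun hxi => hie (hxi ▸ hx), hxS⟩)

theorem exists_mem_Fdelta_choose_two_lt_le {j : ℕ} (hj : 1 ≤ j)
    (hjk : j.choose 2 < gamma 2 Δ univ) :
    ∃ v ∈ Fdelta 2 Δ, j.choose 2 < v ∧ v ≤ (j + 1).choose 2 := by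
  obtain ⟨F, hF⟩ := exists_finset_coloursOn_eq_univ hfin
  obtain ⟨Y₀, hY₀, c, hc⟩ := exists_infinite_monochromatic hfin
  obtain ⟨Y, hYY₀, hY, hY_end⟩ := exists_infinite_subset_forall_pair_eq hfin hY₀ F
  have hγY : gamma 2 Δ Y = 1 :=
    gamma_eq_one_of_pair_eq hY.nontrivial fun x hx y hy => hc x (hYY₀ hx) y (hYY₀ hy)
  have hγF : gamma 2 Δ univ ≤ gamma 2 Δ (Y ∪ F) := by
    rw [gamma, ← hF]
    exact gamma_mono hfin Set.subset_union_right
  obtain ⟨S, -, hS⟩ := Finset.exists_subset_choose_two_lt_le_choose_two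
    (fun S : Finset ℕ => gamma 2 Δ (Y ∪ ↑S)) F hj (by simpa using hγY)
    (fun S hSF i hi => by
      obtain ⟨c, hc⟩ := hY_end i (hSF hi)
      exact gamma_union_le_gamma_union_erase_add_card hfin hi hc)
    (fun S _ d hd => by simpa using card_mul_le_gamma_sub_mul_two hfin Y S hd)
    (hjk.trans_le hγF)
  exact ⟨_, ⟨Y ∪ S, hY.mono Set.subset_union_left, rfl⟩, hS⟩

end Colouring

/-- If `Δ : ℕ^(2) ↠ [k]` is a surjective colouring with `k ≥ C(n,2) + 1`, then `|F_Δ| ≥ n`. -/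
theorem Fdelta_card_lower_bound_graphs (k n : ℕ) (Δ : Finset ℕ → ℕ)
    (hΔ : IsColouring 2 k Δ) (hk : Nat.choose n 2 + 1 ≤ k) :
    n ≤ (Fdelta 2 Δ).ncard := by
  have hfin : (coloursOn 2 Δ Set.univ).Finite := hΔ.coloursOn_univ ▸ (Icc 1 k).finite_toSet
  have key (j : ℕ) (hj : j ∈ Set.Icc 1 n) :
      ∃ v ∈ Fdelta 2 Δ, j.choose 2 < v ∧ v ≤ (j + 1).choose 2 := by
    refine exists_mem_Fdelta_choose_two_lt_le hfin hj.1 ?_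
    rw [hΔ.gamma_univ]
    exact (Nat.choose_le_choose 2 hj.2).trans_lt hk
  choose! v hvF hv using key
  calc n = (Set.Icc 1 n).ncard := by simp
    _ ≤ (Fdelta 2 Δ).ncard :=
      Set.ncard_le_ncard_of_injOn v hvF (fun a ha b hb hab => Nat.eq_of_choose_two_lt_of_le_choose_two
        (hv a ha).1 (hv a ha).2 (hab ▸ (hv b hb).1) (hab ▸ (hv b hb).2)) (finite_Fdelta hfin)
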